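/- Let S be a Cu-semigroup. Then the map ev₁ : [ℕ∪{∞}, S] → S, sending a generalized Cu-morphism f to f(1), is an isomorphism of Q-semigroups: it is an additive order-isomorphism, and f ≺ g in [ℕ∪{∞}, S] if and only if f(1) ≪ g(1) in S. -/

import Mathlib

/-- The sequential way-below (compact containment) relation in a preordered set. -/
def CuWayBelow {S : Type*} [Preorder S] (x y : S) : Prop :=
  ∀ z : ℕ → S, Monotone z → ∀ s : S, IsLUB (Set.range z) s → y ≤ s → ∃ k, x ≤ z k

/-- An abstract Cuntz semigroup: a positively ordered monoid satisfying (O1)-(O4). -/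
class IsCuSgp (S : Type*) [AddCommMonoid S] [PartialOrder S] : Prop where
  zero_le : ∀ a : S, 0 ≤ a
  add_mono : ∀ ⦃a b c d : S⦄, a ≤ b → c ≤ d → a + c ≤ b + d
  O1 : ∀ z : ℕ → S, Monotone z → ∃ s, IsLUB (Set.range z) s
  O2 : ∀ a : S, ∃ z : ℕ → S, (∀ n, CuWayBelow (z n) (z (n + 1))) ∧ IsLUB (Set.range z) a
  O3 : ∀ ⦃a' a b' b : S⦄, CuWayBelow a' a → CuWayBelow b' b → CuWayBelow (a' + b') (a + b)
  O4 : ∀ z w : ℕ → S, Monotone z → Monotone w → ∀ s t : S, IsLUB (Set.range z) s →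
    IsLUB (Set.range w) t → IsLUB (Set.range fun n => z n + w n) (s + t)


variable {S T : Type*} [AddCommMonoid S] [PartialOrder S] [AddCommMonoid T] [PartialOrder T]

/-- Generalized Cu-morphism: preserves addition, order, zero and suprema of
increasing sequences. -/
def IsGenCuMor (φ : S → T) : Prop :=
  φ 0 = 0 ∧ (∀ a b : S, φ (a + b) = φ a + φ b) ∧ Monotone φ ∧
    ∀ z : ℕ → S, Monotone z → ∀ s : S, IsLUB (Set.range z) s →
      IsLUB (Set.range (φ ∘ z)) (φ s)

/-- The type of generalized Cu-morphisms from `S` to `T`. -/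
def GenCuMor (S T : Type*) [AddCommMonoid S] [PartialOrder S] [AddCommMonoid T]
    [PartialOrder T] : Type _ := {φ : S → T // IsGenCuMor φ}

instance [IsCuSgp T] : Add (GenCuMor S T) :=
  ⟨fun f g => ⟨fun a => f.1 a + g.1 a, by
    obtain ⟨f0, fadd, fmono, flub⟩ := f.2
    obtain ⟨g0, gadd, gmono, glub⟩ := g.2
    refine ⟨by dsimp only; rw [f0, g0, add_zero],
      fun a b => by dsimp only; rw [fadd, gadd, add_add_add_comm],
      fun a b hab => IsCuSgp.add_mono (fmono hab) (gmono hab), fun z hz s hs => ?_⟩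
    exact IsCuSgp.O4 (f.1 ∘ z) (g.1 ∘ z) (fmono.comp hz) (gmono.comp hz) _ _
      (flub z hz s hs) (glub z hz s hs)⟩⟩

instance [IsCuSgp T] : Zero (GenCuMor S T) :=
  ⟨⟨fun _ => 0, rfl, fun _ _ => (add_zero 0).symm, fun _ _ _ => le_rfl,
    fun z _ s _ => ⟨by rintro x ⟨n, rfl⟩; exact le_rfl, fun b hb => hb ⟨0, rfl⟩⟩⟩⟩

instance [IsCuSgp T] : AddCommMonoid (GenCuMor S T) where
  add := (· + ·)
  zero := 0
  add_assoc f g h := Subtype.ext (funext fun a => add_assoc _ _ _)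
  zero_add f := Subtype.ext (funext fun a => zero_add _)
  add_zero f := Subtype.ext (funext fun a => add_zero _)
  add_comm f g := Subtype.ext (funext fun a => add_comm _ _)
  nsmul := nsmulRec
  nsmul_zero := fun _ => rfl
  nsmul_succ := fun _ _ => rfl

/-- The auxiliary relation on generalized Cu-morphisms. -/
def precCu (φ ψ : GenCuMor S T) : Prop :=
  ∀ a' a : S, CuWayBelow a' a → CuWayBelow (φ.1 a') (ψ.1 a)



/-!
Additivity forces a generalized Cu-morphism `f : ℕ∪{∞} → S` to send `n` to `n • f 1`, and
preservation of suprema forces `f ∞ = sup_n n • f 1`; conversely this formula defines such a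
morphism for every `s : S`, the only non-obvious identity being `∞ • s + ∞ • s = ∞ • s`, which
comes from (O4). For the auxiliary relation, `a' ≪ a` in `ℕ∪{∞}` means that `a'` is a natural
number `n ≤ a`, and (O3) turns `f 1 ≪ g 1` into `n • f 1 ≪ n • g 1`.
-/

open Set

section WayBelow

variable {α : Type*} [Preorder α] {x y y' : α}

theorem CuWayBelow.le (h : CuWayBelow x y) : x ≤ y := by
  obtain ⟨_, hk⟩ := h (fun _ => y) monotone_const y
    ⟨by rintro _ ⟨_, rfl⟩; rfl, fun _ hb => hb ⟨0, rfl⟩⟩ le_rfl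
  exact hk

theorem CuWayBelow.trans_le (h : CuWayBelow x y) (hy : y ≤ y') : CuWayBelow x y' :=
  fun z hz s hs hle => h z hz s hs (hy.trans hle)

end WayBelow

namespace ENat

theorem isLUB_range_natCast : IsLUB (range ((↑) : ℕ → ℕ∞)) ⊤ :=
  iSup_natCast ▸ isLUB_iSup

theorem exists_natCast_le_of_isLUB {z : ℕ → ℕ∞} {t : ℕ∞} (ht : IsLUB (range z) t) {n : ℕ}
    (hn : (n : ℕ∞) ≤ t) : ∃ k, (n : ℕ∞) ≤ z k := by
  cases n with
  | zero => exact ⟨0, by simp⟩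
  | succ m =>
    obtain ⟨_, ⟨k, rfl⟩, hk⟩ :=
      (lt_isLUB_iff ht).1 ((natCast_lt_succ (n := m)).trans_le hn)
    exact ⟨k, by simpa using natCast_add_one_le_iff.2 hk⟩

theorem cuWayBelow_natCast (n : ℕ) : CuWayBelow (n : ℕ∞) n :=
  fun _ _ _ hs hle => exists_natCast_le_of_isLUB hs hle

theorem ne_top_of_cuWayBelow {a' a : ℕ∞} (h : CuWayBelow a' a) : a' ≠ ⊤ := by
  obtain ⟨k, hk⟩ := (h.trans_le le_top) _ Nat.mono_cast ⊤ isLUB_range_natCast le_rfl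
  exact ne_top_of_le_ne_top (natCast_ne_top k) hk

end ENat

theorem GenCuMor.apply_natCast {R : Type*} [AddCommMonoid R] [PartialOrder R]
    (f : GenCuMor ℕ∞ R) (n : ℕ) : f.1 n = n • f.1 1 := by
  obtain ⟨map_zero, map_add, -, -⟩ := f.2
  induction n with
  | zero => simpa using map_zero
  | succ k ih => rw [Nat.cast_succ, map_add, ih, succ_nsmul]

section CuSemigroup

variable {R : Type*} [AddCommMonoid R] [PartialOrder R] [IsCuSgp R]

instance IsCuSgp.toIsOrderedAddMonoid : IsOrderedAddMonoid R where
  add_le_add_left _ _ h _ := IsCuSgp.add_mono h le_rfl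

theorem CuWayBelow.nsmul {a b : R} (h : CuWayBelow a b) (n : ℕ) :
    CuWayBelow (n • a) (n • b) := by
  induction n with
  | zero =>
    rw [zero_nsmul, zero_nsmul]
    exact fun z _ _ _ _ => ⟨0, IsCuSgp.zero_le (z 0)⟩
  | succ k ih => simpa only [succ_nsmul] using IsCuSgp.O3 ih h

theorem monotone_nsmul_left (s : R) : Monotone fun n : ℕ => n • s :=
  nsmul_left_monotone (IsCuSgp.zero_le s)

noncomputable def nsmulTop (s : R) : R :=
  (IsCuSgp.O1 _ (monotone_nsmul_left s)).choose

theorem isLUB_nsmulTop (s : R) : IsLUB (range fun n : ℕ => n • s) (nsmulTop s) :=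
  (IsCuSgp.O1 _ (monotone_nsmul_left s)).choose_spec

theorem nsmul_le_nsmulTop (s : R) (n : ℕ) : n • s ≤ nsmulTop s :=
  (isLUB_nsmulTop s).1 ⟨n, rfl⟩

theorem nsmulTop_add_self (s : R) : nsmulTop s + nsmulTop s = nsmulTop s := by
  have hsum := IsCuSgp.O4 _ _ (monotone_nsmul_left s) (monotone_nsmul_left s) _ _
    (isLUB_nsmulTop s) (isLUB_nsmulTop s)
  simp only [← add_nsmul] at hsum
  refine hsum.unique ((isLUB_nsmulTop s).of_isCofinalFor ?_ ?_)
  · rintro _ ⟨n, rfl⟩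
    exact ⟨n + n, rfl⟩
  · rintro _ ⟨n, rfl⟩
    exact ⟨_, ⟨n, rfl⟩, monotone_nsmul_left s (Nat.le_add_right n n)⟩

theorem nsmulTop_add_of_le {s x : R} (hx : x ≤ nsmulTop s) : nsmulTop s + x = nsmulTop s :=
  le_antisymm ((add_le_add_right hx _).trans (nsmulTop_add_self s).le)
    (le_add_of_nonneg_right (IsCuSgp.zero_le x))

noncomputable def enatSMul (a : ℕ∞) (s : R) : R :=
  a.recTopCoe (nsmulTop s) (· • s)

@[simp]
theorem enatSMul_top (s : R) : enatSMul ⊤ s = nsmulTop s := rfl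

@[simp]
theorem enatSMul_natCast (n : ℕ) (s : R) : enatSMul (n : ℕ∞) s = n • s := rfl

theorem enatSMul_one (s : R) : enatSMul 1 s = s := by
  simpa using enatSMul_natCast 1 s

theorem monotone_enatSMul (s : R) : Monotone fun a : ℕ∞ => enatSMul a s := by
  intro a b hab
  induction b using ENat.recTopCoe with
  | top =>
    induction a using ENat.recTopCoe with
    | top => exact le_rfl
    | coe m => exact nsmul_le_nsmulTop s m
  | coe n =>
    lift a to ℕ using ne_top_of_le_ne_top (ENat.natCast_ne_top n) hab
    exact monotone_nsmul_left s (Nat.cast_le.1 hab)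

theorem enatSMul_le_enatSMul_right (a : ℕ∞) {s t : R} (h : s ≤ t) :
    enatSMul a s ≤ enatSMul a t := by
  induction a using ENat.recTopCoe with
  | top =>
    refine (isLUB_nsmulTop s).2 ?_
    rintro _ ⟨n, rfl⟩
    exact (nsmul_le_nsmul_right h n).trans (nsmul_le_nsmulTop t n)
  | coe n => exact nsmul_le_nsmul_right h n

theorem enatSMul_add (a b : ℕ∞) (s : R) :
    enatSMul (a + b) s = enatSMul a s + enatSMul b s := by
  induction a using ENat.recTopCoe with
  | top => rw [top_add, enatSMul_top, nsmulTop_add_of_le (monotone_enatSMul s le_top)]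
  | coe m =>
    induction b using ENat.recTopCoe with
    | top =>
      rw [add_top, enatSMul_top, add_comm,
        nsmulTop_add_of_le (monotone_enatSMul s (le_top : (m : ℕ∞) ≤ ⊤))]
    | coe n => simp only [← Nat.cast_add, enatSMul_natCast, add_nsmul]

theorem isLUB_enatSMul_comp {z : ℕ → ℕ∞} {t : ℕ∞} (ht : IsLUB (range z) t) (s : R) :
    IsLUB (range fun k => enatSMul (z k) s) (enatSMul t s) := by
  refine ⟨?_, fun b hb => ?_⟩
  · rintro _ ⟨k, rfl⟩
    exact monotone_enatSMul s (ht.1 ⟨k, rfl⟩)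
  · have natCast_le {n : ℕ} (hn : (n : ℕ∞) ≤ t) : n • s ≤ b := by
      obtain ⟨k, hk⟩ := ENat.exists_natCast_le_of_isLUB ht hn
      exact (monotone_enatSMul s hk).trans (hb ⟨k, rfl⟩)
    induction t using ENat.recTopCoe with
    | top =>
      refine (isLUB_nsmulTop s).2 ?_
      rintro _ ⟨n, rfl⟩
      exact natCast_le le_top
    | coe n => exact natCast_le le_rfl

theorem isGenCuMor_enatSMul (s : R) : IsGenCuMor fun a : ℕ∞ => enatSMul a s :=
  ⟨zero_nsmul s, fun a b => enatSMul_add a b s, monotone_enatSMul s,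
    fun _ _ _ ht => isLUB_enatSMul_comp ht s⟩

theorem enatSMul_cuWayBelow_enatSMul {a' a : ℕ∞} (ha : CuWayBelow a' a) {s t : R}
    (hst : CuWayBelow s t) : CuWayBelow (enatSMul a' s) (enatSMul a t) := by
  lift a' to ℕ using ENat.ne_top_of_cuWayBelow ha
  exact (hst.nsmul a').trans_le (monotone_enatSMul t ha.le)

theorem GenCuMor.apply_eq_enatSMul (f : GenCuMor ℕ∞ R) (a : ℕ∞) :
    f.1 a = enatSMul a (f.1 1) := by
  induction a using ENat.recTopCoe with
  | top =>
    have hsup := f.2.2.2.2 _ Nat.mono_cast ⊤ ENat.isLUB_range_natCast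
    simp only [Function.comp_def, GenCuMor.apply_natCast] at hsup
    exact hsup.unique (isLUB_nsmulTop _)
  | coe n => exact f.apply_natCast n

end CuSemigroup

/-- For a Cu-semigroup `S`, evaluation at `1` is an isomorphism of `Q`-semigroups from
the generalized Cu-morphisms `ℕ∪{∞} → S` onto `S`: it is additive, bijective, an order
embedding, and `f ≺ g` iff `f(1) ≪ g(1)`. -/
theorem stmt16 {S : Type*} [AddCommMonoid S] [PartialOrder S] [IsCuSgp S] :
    (Function.Bijective fun f : GenCuMor ℕ∞ S => f.1 1) ∧
    (∀ f g : GenCuMor ℕ∞ S, (∀ a : ℕ∞, f.1 a ≤ g.1 a) ↔ f.1 1 ≤ g.1 1) ∧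
    (∀ f g : GenCuMor ℕ∞ S, (f + g).1 1 = f.1 1 + g.1 1) ∧
    (∀ f g : GenCuMor ℕ∞ S, precCu f g ↔ CuWayBelow (f.1 1) (g.1 1)) := by
  refine ⟨⟨fun f g h => ?_, fun s => ⟨⟨_, isGenCuMor_enatSMul s⟩, enatSMul_one s⟩⟩,
    fun f g => ⟨fun h => h 1, fun h a => ?_⟩, fun f g => rfl,
    fun f g => ⟨fun h => ?_, fun h a' a ha => ?_⟩⟩
  · exact Subtype.ext (funext fun a => by simp only [GenCuMor.apply_eq_enatSMul _ a, h])
  · rw [f.apply_eq_enatSMul, g.apply_eq_enatSMul]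
    exact enatSMul_le_enatSMul_right a h
  · exact h 1 1 (Nat.cast_one (R := ℕ∞) ▸ ENat.cuWayBelow_natCast 1)
  · rw [f.apply_eq_enatSMul, g.apply_eq_enatSMul]
    exact enatSMul_cuWayBelow_enatSMul ha h
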